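/- Let the outer product ∇f(x)∇f(x)ᵀ be integrated against a probability density p to form C. If C has rank at most n, then ∇f(x) ∈ col(C) for p-almost every x at which ∇f is defined; in particular, if f is a ridge function with matrix A then ∇f(x) ⊥ ker(Aᵀ) pointwise. -/

import Mathlib

/-!
For `u ∈ ker C` we have `∫ (∇f ⬝ u)² dμ = uᵀ C u = 0`, so `∇f ⬝ u = 0` almost everywhere;
running over a basis of `ker C` gives `∇f ⊥ ker C` almost everywhere, and `(ker C)ᗮ = col C`
because `C` is symmetric. The ridge statement is the chain rule `∇f(x) = A ∇g(Aᵀx)`.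
-/

open MeasureTheory Matrix

theorem MeasureTheory.ae_le_ker_of_forall_mem {X 𝕜 E F : Type*} [MeasurableSpace X]
    {μ : Measure X} [Field 𝕜] [AddCommGroup E] [Module 𝕜 E] [AddCommGroup F] [Module 𝕜 F]
    {K : Submodule 𝕜 E} [FiniteDimensional 𝕜 K] {φ : X → E →ₗ[𝕜] F}
    (h : ∀ u ∈ K, ∀ᵐ x ∂μ, φ x u = 0) : ∀ᵐ x ∂μ, K ≤ LinearMap.ker (φ x) := by
  let b := Module.finBasis 𝕜 K
  have hb : ∀ᵐ x ∂μ, ∀ k, φ x (b k) = 0 := ae_all_iff.2 fun k => h _ (b k).2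
  filter_upwards [hb] with x hx u hu
  have hzero : φ x ∘ₗ K.subtype = 0 := b.ext fun k => hx k
  exact LinearMap.congr_fun hzero ⟨u, hu⟩

section SecondMoment

variable {X ι : Type*} [MeasurableSpace X] {μ : Measure X} [Fintype ι] {v : X → ι → ℝ}
  {C : Matrix ι ι ℝ}

theorem dotProduct_sq_eq_sum_sum (w u : ι → ℝ) :
    (w ⬝ᵥ u) ^ 2 = ∑ i, ∑ j, u i * u j * (w i * w j) := by
  simp only [dotProduct, sq, Finset.sum_mul_sum]
  exact Finset.sum_congr rfl fun i _ => Finset.sum_congr rfl fun j _ => by ring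

theorem integrable_dotProduct_sq (hint : ∀ i j, Integrable (fun x => v x i * v x j) μ)
    (u : ι → ℝ) : Integrable (fun x => (v x ⬝ᵥ u) ^ 2) μ := by
  simp only [dotProduct_sq_eq_sum_sum]
  exact integrable_finsetSum _ fun i _ => integrable_finsetSum _ fun j _ =>
    (hint i j).const_mul _

theorem integral_dotProduct_sq (hint : ∀ i j, Integrable (fun x => v x i * v x j) μ)
    (hC : ∀ i j, C i j = ∫ x, v x i * v x j ∂μ) (u : ι → ℝ) :
    ∫ x, (v x ⬝ᵥ u) ^ 2 ∂μ = u ⬝ᵥ C *ᵥ u := by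
  simp only [dotProduct_sq_eq_sum_sum]
  rw [integral_finsetSum _ fun i _ => integrable_finsetSum _ fun j _ =>
    (hint i j).const_mul _]
  simp only [dotProduct, mulVec, Finset.mul_sum]
  refine Finset.sum_congr rfl fun i _ => ?_
  rw [integral_finsetSum _ fun j _ => (hint i j).const_mul _]
  refine Finset.sum_congr rfl fun j _ => ?_
  rw [integral_const_mul, hC]
  ring

theorem ae_dotProduct_eq_zero_of_mulVec_eq_zero
    (hint : ∀ i j, Integrable (fun x => v x i * v x j) μ)
    (hC : ∀ i j, C i j = ∫ x, v x i * v x j ∂μ) {u : ι → ℝ} (hu : C *ᵥ u = 0) :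
    ∀ᵐ x ∂μ, v x ⬝ᵥ u = 0 := by
  have hsq : (fun x => (v x ⬝ᵥ u) ^ 2) =ᵐ[μ] 0 := by
    rw [← integral_eq_zero_iff_of_nonneg (fun x => sq_nonneg _) (integrable_dotProduct_sq hint u),
      integral_dotProduct_sq hint hC, hu, dotProduct_zero]
  filter_upwards [hsq] with x hx
  exact pow_eq_zero_iff two_ne_zero |>.mp hx

end SecondMoment

theorem Matrix.mem_range_mulVecLin_of_isHermitian {ι : Type*} [Fintype ι] [DecidableEq ι]
    {C : Matrix ι ι ℝ} (hC : C.IsHermitian) {w : ι → ℝ}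
    (hw : ∀ u, C *ᵥ u = 0 → w ⬝ᵥ u = 0) : w ∈ LinearMap.range C.mulVecLin := by
  set T := toEuclideanLin C
  have hrange : LinearMap.range T = (LinearMap.ker T)ᗮ := by
    rw [← (isSymmetric_toEuclideanLin_iff.2 hC).orthogonal_range, Submodule.orthogonal_orthogonal]
  have hw' : WithLp.toLp 2 w ∈ (LinearMap.ker T)ᗮ := by
    intro u hu
    rw [EuclideanSpace.inner_eq_star_dotProduct, star_trivial]
    exact hw _ (congrArg WithLp.ofLp hu)
  obtain ⟨z, hz⟩ := hrange ▸ hw'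
  exact ⟨z.ofLp, congrArg WithLp.ofLp hz⟩

theorem inner_gradient_comp_eq_zero {E F : Type*} [NormedAddCommGroup E] [InnerProductSpace ℝ E]
    [CompleteSpace E] [NormedAddCommGroup F] [NormedSpace ℝ F] {g : F → ℝ} {L : E →L[ℝ] F}
    {x u : E} (hg : DifferentiableAt ℝ g (L x)) (hu : L u = 0) :
    inner ℝ (gradient (g ∘ L) x) u = 0 := by
  rw [gradient, InnerProductSpace.toDual_symm_apply, fderiv_comp x hg L.differentiableAt,
    ContinuousLinearMap.comp_apply, ContinuousLinearMap.fderiv, hu, map_zero]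

theorem gradient_in_column_space_general (m n : ℕ) (A : Matrix (Fin m) (Fin n) ℝ)
    (g : EuclideanSpace ℝ (Fin n) → ℝ) (hg : ContDiff ℝ 1 g)
    (f : EuclideanSpace ℝ (Fin m) → ℝ)
    (hf : ∀ x, f x = g (WithLp.toLp 2 (A.transpose.mulVec x : Fin n → ℝ) : EuclideanSpace ℝ (Fin n)))
    (μ : Measure (EuclideanSpace ℝ (Fin m)))
    (hint : ∀ i j : Fin m,
      Integrable (fun x => gradient f x i * gradient f x j) μ)
    (C : Matrix (Fin m) (Fin m) ℝ)
    (hC : ∀ i j, C i j = ∫ x, gradient f x i * gradient f x j ∂μ) :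
    (∀ᵐ x ∂μ, (fun i => gradient f x i) ∈ LinearMap.range C.mulVecLin) ∧
    (∀ (x : EuclideanSpace ℝ (Fin m)) (u : Fin m → ℝ),
      A.transpose.mulVec u = 0 → ∑ i, gradient f x i * u i = 0) := by
  constructor
  · have hsymm : C.IsHermitian := isHermitian_iff_isSymm.2 <| IsSymm.ext fun i j => by
      simp only [hC, mul_comm]
    have hker := ae_le_ker_of_forall_mem (K := LinearMap.ker C.mulVecLin)
      (φ := fun x => dotProductBilin ℝ ℝ (fun i => gradient f x i))
      fun u hu => ae_dotProduct_eq_zero_of_mulVec_eq_zero hint hC hu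
    filter_upwards [hker] with x hx
    exact mem_range_mulVecLin_of_isHermitian hsymm fun u hu => hx hu
  · intro x u hu
    let L := (toEuclideanLin Aᵀ).toContinuousLinearMap
    have hfL : f = g ∘ L := funext hf
    have hLu : L (WithLp.toLp 2 u) = 0 := congrArg (WithLp.toLp 2) hu
    have horth := inner_gradient_comp_eq_zero ((hg.differentiable one_ne_zero) (L x)) hLu
    rwa [← hfL, EuclideanSpace.inner_eq_star_dotProduct, star_trivial, dotProduct_comm] at horth

/-- With `C = ∫ ∇f ∇fᵀ dμ` of rank at most `n`, the gradient `∇f(x)` lies in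
`col C` for `μ`-almost every `x`; and for a ridge function `f x = g (Aᵀ x)`,
pointwise `∇f(x) ⊥ ker Aᵀ`. -/
theorem gradient_in_column_space (m n : ℕ) (A : Matrix (Fin m) (Fin n) ℝ)
    (g : EuclideanSpace ℝ (Fin n) → ℝ) (hg : ContDiff ℝ 1 g)
    (f : EuclideanSpace ℝ (Fin m) → ℝ)
    (hf : ∀ x, f x = g (WithLp.toLp 2 (A.transpose.mulVec x : Fin n → ℝ) : EuclideanSpace ℝ (Fin n)))
    (μ : Measure (EuclideanSpace ℝ (Fin m))) [IsProbabilityMeasure μ]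
    (hint : ∀ i j : Fin m,
      Integrable (fun x => gradient f x i * gradient f x j) μ)
    (C : Matrix (Fin m) (Fin m) ℝ)
    (hC : ∀ i j, C i j = ∫ x, gradient f x i * gradient f x j ∂μ)
    (hrank : C.rank ≤ n) :
    (∀ᵐ x ∂μ, (fun i => gradient f x i) ∈ LinearMap.range C.mulVecLin) ∧
    (∀ (x : EuclideanSpace ℝ (Fin m)) (u : Fin m → ℝ),
      A.transpose.mulVec u = 0 → ∑ i, gradient f x i * u i = 0) :=
  gradient_in_column_space_general m n A g hg f hf μ hint C hC
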